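/- In any pure-strategy Nash equilibrium of the first-price auction, the winner is agent 1 (the agent with the highest valuation), and the price lies in [v_2, v_1]. -/

import Mathlib

open Classical

/-- The k-th highest bid (k counted from 1). -/
noncomputable def kthHighest {n : ℕ} (b : Fin n → ℝ) (k : ℕ) : ℝ :=
  ((List.ofFn b).mergeSort (fun x y => decide (y ≤ x))).getD (k - 1) 0

/-- Agent `i` wins: her bid is highest, with ties broken toward the
agent with the highest valuation, i.e. (for strictly decreasing valuations)
the lowest index among the maximal bidders. -/
def wins {n : ℕ} (b : Fin n → ℝ) (i : Fin n) : Prop :=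
  (∀ j, b j ≤ b i) ∧ ∀ j, b j = b i → i ≤ j

/-- The price paid by the winner in the k-price auction (2 ≤ k ≤ n), or in the
first-price auction (the case k = n+1), where the winner pays the highest bid. -/
noncomputable def price {n : ℕ} (k : ℕ) (b : Fin n → ℝ) : ℝ :=
  if k = n + 1 then kthHighest b 1 else kthHighest b k

/-- The winner gets her valuation minus the price; losers get 0. -/
noncomputable def utility {n : ℕ} (v : Fin n → ℝ) (k : ℕ) (b : Fin n → ℝ)
    (i : Fin n) : ℝ :=
  if wins b i then v i - price k b else 0

/-- Pure-strategy Nash equilibrium with nonnegative bids: no agent can strictly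
improve her utility by a unilateral deviation to another nonnegative bid. -/
def NashEq {n : ℕ} (v : Fin n → ℝ) (k : ℕ) (b : Fin n → ℝ) : Prop :=
  (∀ i, 0 ≤ b i) ∧
  ∀ i : Fin n, ∀ b' : ℝ, 0 ≤ b' →
    utility v k (Function.update b i b') i ≤ utility v k b i

/-- One-based valuation indexing, with the convention `v_{n+1} = 0`. -/
noncomputable def vIdx {n : ℕ} (v : Fin n → ℝ) (j : ℕ) : ℝ :=
  if h : 1 ≤ j ∧ j ≤ n then v ⟨j - 1, by omega⟩ else 0

/-!
A loser whose value exceeds the winning bid could overbid the winner by a small margin and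
profit, and a winner whose bid exceeds her value would rather bid 0. So in equilibrium the
winning bid lies between every losing value and the winner's value, which for strictly
decreasing valuations leaves only agent 1 as the winner.
-/

theorem kthHighest_one_eq_of_wins {n : ℕ} {b : Fin n → ℝ} {i : Fin n} (hw : wins b i) :
    kthHighest b 1 = b i := by
  set L := (List.ofFn b).mergeSort (fun x y => decide (y ≤ x)) with hL
  have hperm : L.Perm (List.ofFn b) := List.mergeSort_perm _ _
  have hsorted : L.Pairwise (· ≥ ·) := by
    simpa using List.pairwise_mergeSort (le := fun x y : ℝ => decide (y ≤ x))
      (fun _ _ _ h₁ h₂ => by simp only [decide_eq_true_eq] at *; linarith)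
      (fun x y => by simp [le_total]) (List.ofFn b)
  have hmem : b i ∈ L := hperm.mem_iff.mpr (List.mem_ofFn.mpr ⟨i, rfl⟩)
  have hne : L ≠ [] := List.ne_nil_of_mem hmem
  obtain ⟨j, hj⟩ := List.mem_ofFn.mp (hperm.mem_iff.mp (L.head_mem hne))
  have hhead : kthHighest b 1 = L.head hne := by
    obtain ⟨x, t, hxt⟩ := List.exists_cons_of_ne_nil hne
    simp [kthHighest, ← hL, hxt]
  rw [hhead]
  exact le_antisymm (hj ▸ hw.1 j) (hsorted.rel_head hmem)

section FirstPrice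

variable {n : ℕ} {v : Fin n → ℝ} {b : Fin n → ℝ} {i j : Fin n}

theorem wins_unique (hi : wins b i) (hj : wins b j) : i = j :=
  le_antisymm (hi.2 j (le_antisymm (hi.1 j) (hj.1 i)))
    (hj.2 i (le_antisymm (hj.1 i) (hi.1 j)))

theorem wins_update_self {x : ℝ} (h : ∀ k ≠ j, b k < x) : wins (Function.update b j x) j := by
  refine ⟨fun k => ?_, fun k hk => ?_⟩
  · rcases eq_or_ne k j with rfl | hkj
    · rfl
    · simpa [hkj] using (h k hkj).le
  · rcases eq_or_ne k j with rfl | hkj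
    · rfl
    · simp only [Function.update_self, Function.update_of_ne hkj] at hk
      exact absurd hk (h k hkj).ne

theorem price_first_eq_of_wins (hw : wins b i) : price (n + 1) b = b i := by
  simp [price, kthHighest_one_eq_of_wins hw]

theorem utility_first_of_wins (hw : wins b i) : utility v (n + 1) b i = v i - b i := by
  rw [utility, if_pos hw, price_first_eq_of_wins hw]

theorem utility_of_not_wins {k : ℕ} (hw : ¬ wins b i) : utility v k b i = 0 :=
  if_neg hw

theorem utility_first_update_self_of_wins {x : ℝ} (hw : wins (Function.update b i x) i) :
    utility v (n + 1) (Function.update b i x) i = v i - x := by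
  rw [utility_first_of_wins hw, Function.update_self]

theorem utility_first_update_zero_nonneg (hvi : 0 < v i) :
    0 ≤ utility v (n + 1) (Function.update b i 0) i := by
  by_cases hw : wins (Function.update b i 0) i
  · rw [utility_first_update_self_of_wins hw]
    linarith
  · rw [utility_of_not_wins hw]

theorem NashEq.winning_bid_le_value (hb : NashEq v (n + 1) b) (hw : wins b i) (hvi : 0 < v i) :
    b i ≤ v i := by
  have := (utility_first_update_zero_nonneg hvi).trans (hb.2 i 0 le_rfl)
  rw [utility_first_of_wins hw] at this
  linarith

theorem NashEq.value_le_winning_bid (hb : NashEq v (n + 1) b) (hw : wins b i) (hji : j ≠ i) :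
    v j ≤ b i := by
  refine le_of_forall_gt_imp_ge_of_dense fun x hx => ?_
  have hwx : wins (Function.update b j x) j :=
    wins_update_self fun k _ => (hw.1 k).trans_lt hx
  have hdev := hb.2 j x ((hb.1 i).trans hx.le)
  rw [utility_first_update_self_of_wins hwx,
    utility_of_not_wins fun hj => hji (wins_unique hj hw)] at hdev
  linarith

end FirstPrice

theorem stmt8 {n : ℕ} (hn : 2 ≤ n) (v : Fin n → ℝ) (hv : StrictAnti v) (hvpos : ∀ i, 0 < v i)
    (b : Fin n → ℝ) (hb : NashEq v (n + 1) b) (i : Fin n) (hw : wins b i) :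
    i = ⟨0, by omega⟩ ∧ vIdx v 2 ≤ price (n + 1) b ∧
      price (n + 1) b ≤ v ⟨0, by omega⟩ := by
  have hi : i = ⟨0, by omega⟩ := by
    by_contra hi
    have h0i : (⟨0, by omega⟩ : Fin n) < i :=
      Fin.lt_def.mpr (Nat.pos_of_ne_zero fun h => hi (Fin.ext h))
    have := hb.value_le_winning_bid hw h0i.ne
    linarith [hv h0i, hb.winning_bid_le_value hw (hvpos i)]
  subst hi
  have hv2 : vIdx v 2 = v ⟨1, by omega⟩ := dif_pos ⟨by omega, by omega⟩
  rw [price_first_eq_of_wins hw, hv2]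
  exact ⟨rfl, hb.value_le_winning_bid hw (by simp [Fin.ext_iff]),
    hb.winning_bid_le_value hw (hvpos _)⟩
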